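/- Let α, β be epsilon numbers and t an ordinal with α ≤ t < α⁺ and Ep(t) ∩ α ⊆ β. Then π(t[α := β]) = (π t)[α := β], d(π(t[α := β])) = (d π t)[α := β], and η(t[α := β]) = (η t)[α := β]. -/

import Mathlib

open Ordinal

def IsEps (x : Ordinal.{0}) : Prop := omega0 ^ x = x

noncomputable def nextEps (x : Ordinal.{0}) : Ordinal.{0} := sInf {e | IsEps e ∧ x < e}

inductive InEp : Ordinal.{0} → Ordinal.{0} → Prop
  | self (x : Ordinal.{0}) (h : omega0 ^ x = x) : InEp x x
  | exp (x e c y : Ordinal.{0}) (h : omega0 ^ x ≠ x) (hm : (e, c) ∈ CNF omega0 x)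
      (hy : InEp y e) : InEp y x

/-- The set of epsilon numbers appearing in the iterated Cantor normal form of `x`. -/
def Ep (x : Ordinal.{0}) : Set Ordinal.{0} := {y | InEp y x}

/-- Substitution of the epsilon number `α` by the epsilon number `e` in the
iterated Cantor normal form of `x`. -/
noncomputable def subst (α e : Ordinal.{0}) (x : Ordinal.{0}) : Ordinal.{0} :=
  if h : omega0 ^ x = x then (if x = α then e else x)
  else ((CNF omega0 x).attach.map (fun p => omega0 ^ (subst α e p.1.1) * p.1.2)).sum
termination_by x
decreasing_by
  have hx0 : x ≠ 0 := by
    rintro rfl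
    have := p.2
    simp [Ordinal.CNF.zero_right] at this
  have hle := Ordinal.CNF.fst_le_log p.2
  have hlt : Ordinal.log omega0 x < x := by
    have h1 : x < omega0 ^ x :=
      lt_of_le_of_ne (Ordinal.right_le_opow x one_lt_omega0) (Ne.symm h)
    exact (Ordinal.lt_opow_iff_log_lt one_lt_omega0 hx0).mp h1
  exact lt_of_le_of_lt hle hlt

/-- `π t` is the leading additively principal term of the Cantor normal form of `t`. -/
noncomputable def piOrd (t : Ordinal.{0}) : Ordinal.{0} :=
  if t = 0 then 0 else omega0 ^ (Ordinal.log omega0 t)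

/-- `d q` is the last exponent `Qₘ` of the CNF of `Q` when `q = ω^Q` is additively
principal, and `0` otherwise. -/
noncomputable def dOrd (q : Ordinal.{0}) : Ordinal.{0} :=
  if omega0 ^ (Ordinal.log omega0 q) = q then
    (((CNF omega0 (Ordinal.log omega0 q)).getLast?).map Prod.fst).getD 0
  else 0

noncomputable def etaOrd (t : Ordinal.{0}) : Ordinal.{0} := max t (piOrd t + dOrd (piOrd t))

/-!
Call `x` admissible when every epsilon number in the iterated Cantor normal form of `x` is `α` or
lies below both `α` and `β`. Every epsilon number of `t < α⁺` is at most `α`, so `t` is admissible.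

On admissible ordinals the substitution acts on the Cantor normal form exponent by exponent and is
strictly increasing; the two facts are proved together by well-founded induction. For
`y = ω^L·c + r` the tail `r` has a smaller leading exponent than `L`, so by monotonicity its image
stays below `ω^(L[α := β])` and `ω^(L[α := β])·c + r[α := β]` is again in normal form; monotonicity
at `y` then follows by comparing normal forms lexicographically. Now `π` and `d ∘ π` are read off
the normal form, and `η t` is the maximum of the admissible ordinals `t` and `π t + d(π t)`, which
a strictly increasing map preserves.
-/

open Set

theorem IsEps.opow_eq {e : Ordinal.{0}} (h : IsEps e) : ω ^ e = e := h

theorem IsEps.ne_zero {e : Ordinal.{0}} (h : IsEps e) : e ≠ 0 := by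
  rintro rfl
  simp [IsEps] at h

theorem IsEps.CNF_eq {e : Ordinal.{0}} (h : IsEps e) : CNF ω e = [(e, 1)] := by
  simpa [h.opow_eq, CNF.zero_right] using
    CNF.opow_mul_add one_lt_omega0 one_ne_zero one_lt_omega0 (opow_pos e omega0_pos)

theorem log_lt_self_of_not_isEps {x : Ordinal.{0}} (hx : ¬IsEps x) (hx0 : x ≠ 0) :
    log ω x < x :=
  (lt_opow_iff_log_lt one_lt_omega0 hx0).1 <|
    (right_le_opow x one_lt_omega0).lt_of_ne (Ne.symm hx)

theorem div_lt_div_or_mod_lt_mod {x y b : Ordinal.{0}} (h : x < y) :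
    x / b < y / b ∨ x / b = y / b ∧ x % b < y % b := by
  rcases eq_or_ne b 0 with rfl | hb
  · simpa using h
  have hle : x / b ≤ y / b := (div_le hb).2 (h.trans (lt_mul_succ_div y hb))
  refine hle.lt_or_eq.imp_right fun heq => ⟨heq, ?_⟩
  rw [← add_lt_add_iff_left (b * (x / b)), div_add_mod, heq, div_add_mod]
  exact h

theorem CNF_head_eq_of_CNF_eq_map {a b : Ordinal.{0}} {f : Ordinal.{0} → Ordinal.{0}}
    (ha : a ≠ 0) (h : CNF ω b = (CNF ω a).map (Prod.map f id)) :
    log ω b = f (log ω a) ∧ b / ω ^ log ω b = a / ω ^ log ω a := by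
  have hb : b ≠ 0 := by
    rintro rfl
    simp [CNF.ne_zero ha, CNF.zero_right] at h
  rw [CNF.ne_zero ha, CNF.ne_zero hb, List.map_cons] at h
  simp only [List.cons.injEq, Prod.map, id, Prod.mk.injEq] at h
  exact h.1

section Ep

variable {x y : Ordinal.{0}}

theorem mem_Ep_self (h : IsEps x) : x ∈ Ep x := InEp.self x h

theorem le_of_mem_Ep (h : y ∈ Ep x) : y ≤ x := by
  induction h with
  | self => rfl
  | exp x e c y _ hm _ ih => exact ih.trans ((CNF.fst_le_log hm).trans (log_le_self _ _))

theorem isEps_of_mem_Ep (h : y ∈ Ep x) : IsEps y := by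
  induction h with
  | self x h => exact h
  | exp _ _ _ _ _ _ _ ih => exact ih

theorem mem_Ep_iff : y ∈ Ep x ↔ ∃ p ∈ CNF ω x, y ∈ Ep p.1 := by
  constructor
  · intro hy
    cases hy with
    | self _ hx => exact ⟨(x, 1), by simp [IsEps.CNF_eq hx], mem_Ep_self hx⟩
    | exp _ e c _ _ hm hy => exact ⟨(e, c), hm, hy⟩
  · rintro ⟨p, hp, hy⟩
    by_cases hx : IsEps x
    · rw [hx.CNF_eq, List.mem_singleton] at hp
      rwa [hp] at hy
    · exact InEp.exp x p.1 p.2 y hx hp hy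

theorem Ep_zero : Ep 0 = ∅ := by
  refine eq_empty_of_forall_notMem fun y hy => ?_
  obtain ⟨p, hp, -⟩ := mem_Ep_iff.1 hy
  simp [CNF.zero_right] at hp

theorem Ep_subset_of_mem_CNF {p : Ordinal.{0} × Ordinal.{0}} (hp : p ∈ CNF ω x) :
    Ep p.1 ⊆ Ep x :=
  fun _ hy => mem_Ep_iff.2 ⟨p, hp, hy⟩

theorem Ep_log_subset (x : Ordinal.{0}) : Ep (log ω x) ⊆ Ep x := by
  rcases eq_or_ne x 0 with rfl | hx
  · rw [log_zero_right]
  · refine Ep_subset_of_mem_CNF (p := (log ω x, x / ω ^ log ω x)) ?_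
    rw [CNF.ne_zero hx]
    exact List.mem_cons_self

theorem Ep_mod_subset (x : Ordinal.{0}) : Ep (x % ω ^ log ω x) ⊆ Ep x := by
  rcases eq_or_ne x 0 with rfl | hx
  · rw [zero_mod]
  · intro y hy
    obtain ⟨p, hp, hy⟩ := mem_Ep_iff.1 hy
    exact Ep_subset_of_mem_CNF (by rw [CNF.ne_zero hx]; exact List.mem_cons_of_mem _ hp) hy

theorem Ep_opow_mul_add_subset {L c : Ordinal.{0}} (hc0 : c ≠ 0) (hc : c < ω) (hx : x < ω ^ L) :
    Ep (ω ^ L * c + x) ⊆ Ep L ∪ Ep x := by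
  intro y hy
  obtain ⟨p, hp, hy⟩ := mem_Ep_iff.1 hy
  rw [CNF.opow_mul_add one_lt_omega0 hc0 hc hx, List.mem_cons] at hp
  rcases hp with rfl | hp
  · exact Or.inl hy
  · exact Or.inr (Ep_subset_of_mem_CNF hp hy)

theorem Ep_opow_add_subset {L : Ordinal.{0}} (hx : x ≤ ω ^ L) :
    Ep (ω ^ L + x) ⊆ Ep L ∪ Ep x := by
  rcases hx.lt_or_eq with hx | rfl
  · simpa using Ep_opow_mul_add_subset one_ne_zero one_lt_omega0 hx
  · have h2 : (2 : Ordinal.{0}) < ω := natCast_lt_omega0 2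
    have := Ep_opow_mul_add_subset two_ne_zero h2 (opow_pos L omega0_pos)
    rw [add_zero, Ordinal.mul_two, Ep_zero, union_empty] at this
    exact this.trans subset_union_left

theorem lt_of_Ep_subset_Iio {β : Ordinal.{0}} (hβ : IsEps β) (h : Ep x ⊆ Iio β) : x < β := by
  induction x using WellFoundedLT.induction with
  | _ x ih =>
  by_cases hx : IsEps x
  · exact h (mem_Ep_self hx)
  rcases eq_or_ne x 0 with rfl | hx0
  · exact pos_iff_ne_zero.2 hβ.ne_zero
  rw [← hβ.opow_eq, lt_opow_iff_log_lt one_lt_omega0 hx0]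
  exact ih _ (log_lt_self_of_not_isEps hx hx0) ((Ep_log_subset x).trans h)

end Ep

section Subst

variable {α β x L c : Ordinal.{0}}

theorem subst_of_isEps (h : IsEps x) : subst α β x = if x = α then β else x := by
  rw [subst, dif_pos h.opow_eq]

theorem subst_self (hα : IsEps α) : subst α β α = β := by
  rw [subst_of_isEps hα, if_pos rfl]

theorem subst_of_not_isEps (h : ¬IsEps x) :
    subst α β x = ((CNF ω x).map fun p => ω ^ subst α β p.1 * p.2).sum := by
  rw [subst, dif_neg (show ¬ω ^ x = x from h)]
  exact congrArg List.sum
    (List.attach_map_val (f := fun p : Ordinal.{0} × Ordinal.{0} => ω ^ subst α β p.1 * p.2))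

theorem subst_zero : subst α β 0 = 0 := by
  rw [subst_of_not_isEps (by simp [IsEps]), CNF.zero_right, List.map_nil, List.sum_nil]

theorem isEps_subst (hβ : IsEps β) (h : IsEps x) : IsEps (subst α β x) := by
  rw [subst_of_isEps h]
  split_ifs <;> assumption

theorem subst_eq_sum (hβ : IsEps β) (x : Ordinal.{0}) :
    subst α β x = ((CNF ω x).map fun p => ω ^ subst α β p.1 * p.2).sum := by
  by_cases h : IsEps x
  · simp [h.CNF_eq, (isEps_subst hβ h).opow_eq]
  · exact subst_of_not_isEps h

theorem subst_eq_opow_mul_add (hβ : IsEps β) (hx : x ≠ 0) :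
    subst α β x =
      ω ^ subst α β (log ω x) * (x / ω ^ log ω x) + subst α β (x % ω ^ log ω x) := by
  rw [subst_eq_sum hβ, CNF.ne_zero hx, List.map_cons, List.sum_cons, ← subst_eq_sum hβ]

theorem subst_opow_mul_add (hβ : IsEps β) (hc0 : c ≠ 0) (hc : c < ω) (hx : x < ω ^ L) :
    subst α β (ω ^ L * c + x) = ω ^ subst α β L * c + subst α β x := by
  rw [subst_eq_sum hβ, CNF.opow_mul_add one_lt_omega0 hc0 hc hx, List.map_cons, List.sum_cons,
    ← subst_eq_sum hβ]

theorem subst_opow (hβ : IsEps β) (L : Ordinal.{0}) :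
    subst α β (ω ^ L) = ω ^ subst α β L := by
  simpa [subst_zero] using
    subst_opow_mul_add (α := α) hβ one_ne_zero one_lt_omega0 (opow_pos L omega0_pos)

theorem subst_opow_add (hβ : IsEps β) (hx : x ≤ ω ^ L) :
    subst α β (ω ^ L + x) = ω ^ subst α β L + subst α β x := by
  rcases hx.lt_or_eq with hx | rfl
  · simpa using subst_opow_mul_add hβ one_ne_zero one_lt_omega0 hx
  · have h2 : (2 : Ordinal.{0}) < ω := natCast_lt_omega0 2
    have := subst_opow_mul_add (α := α) hβ two_ne_zero h2 (opow_pos L omega0_pos)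
    simp only [add_zero, subst_zero, Ordinal.mul_two] at this
    rw [subst_opow hβ]
    exact this

theorem subst_ne_zero (hβ : IsEps β) (hx : x ≠ 0) : subst α β x ≠ 0 := by
  rw [subst_eq_opow_mul_add hβ hx, Ne, add_eq_zero_iff, not_and]
  exact fun h => absurd h <| mul_ne_zero (opow_ne_zero _ omega0_ne_zero)
    (div_opow_log_pos ω hx).ne'

theorem subst_of_notMem_Ep (hβ : IsEps β) (h : α ∉ Ep x) : subst α β x = x := by
  induction x using WellFoundedLT.induction with
  | _ x ih =>
  by_cases hx : IsEps x
  · rw [subst_of_isEps hx, if_neg fun (hxα : x = α) => h (hxα ▸ mem_Ep_self hx)]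
  rcases eq_or_ne x 0 with rfl | hx0
  · exact subst_zero
  rw [subst_eq_opow_mul_add hβ hx0,
    ih _ (log_lt_self_of_not_isEps hx hx0) fun h' => h (Ep_log_subset x h'),
    ih _ (mod_opow_log_lt_self ω hx0) fun h' => h (Ep_mod_subset x h'), div_add_mod]

theorem subst_of_lt (hβ : IsEps β) (h : x < α) : subst α β x = x :=
  subst_of_notMem_Ep hβ fun hα => (le_of_mem_Ep hα).not_gt h

end Subst

def SubstAdmissible (α β x : Ordinal.{0}) : Prop := Ep x ⊆ insert α (Iio α ∩ Iio β)

namespace SubstAdmissible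

variable {α β x : Ordinal.{0}}

theorem mono {y : Ordinal.{0}} (hx : SubstAdmissible α β x) (h : Ep y ⊆ Ep x) :
    SubstAdmissible α β y :=
  h.trans hx

theorem log (hx : SubstAdmissible α β x) : SubstAdmissible α β (log ω x) :=
  hx.mono (Ep_log_subset x)

theorem mod (hx : SubstAdmissible α β x) : SubstAdmissible α β (x % ω ^ Ordinal.log ω x) :=
  hx.mono (Ep_mod_subset x)

theorem lt_of_lt (hβ : IsEps β) (hx : SubstAdmissible α β x) (hxα : x < α) : x < β :=
  lt_of_Ep_subset_Iio hβ fun _ he =>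
    ((hx he).resolve_left ((le_of_mem_Ep he).trans_lt hxα).ne).2

theorem of_lt_nextEps {t : Ordinal.{0}} (ht : t < nextEps α)
    (hEp : Ep t ∩ Iio α ⊆ Iio β) : SubstAdmissible α β t := by
  intro e he
  have heα : e ≤ α := by
    by_contra! h
    have : nextEps α ≤ e := csInf_le' (s := {e | IsEps e ∧ α < e}) ⟨isEps_of_mem_Ep he, h⟩
    exact this.not_gt ((le_of_mem_Ep he).trans_lt ht)
  rcases heα.lt_or_eq with h | h
  · exact Or.inr ⟨h, hEp ⟨he, h⟩⟩
  · exact Or.inl h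

end SubstAdmissible

section Main

variable {α β x y : Ordinal.{0}}

theorem CNF_subst_of_isEps (hβ : IsEps β) (h : IsEps y) :
    CNF ω (subst α β y) = (CNF ω y).map (Prod.map (subst α β) id) := by
  rw [(isEps_subst hβ h).CNF_eq, h.CNF_eq]
  rfl

theorem CNF_subst_step (hβ : IsEps β) (hy : SubstAdmissible α β y)
    (ih : ∀ z < y, SubstAdmissible α β z →
      CNF ω (subst α β z) = (CNF ω z).map (Prod.map (subst α β) id) ∧
      ∀ x < z, SubstAdmissible α β x → subst α β x < subst α β z) :
    CNF ω (subst α β y) = (CNF ω y).map (Prod.map (subst α β) id) := by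
  by_cases hε : IsEps y
  · exact CNF_subst_of_isEps hβ hε
  rcases eq_or_ne y 0 with rfl | hy0
  · simp [subst_zero, CNF.zero_right]
  set L := log ω y
  set r := y % ω ^ L
  have hL : L < y := log_lt_self_of_not_isEps hε hy0
  have hr : r < y := mod_opow_log_lt_self ω hy0
  have hrL : r < ω ^ L := mod_lt y (opow_ne_zero L omega0_ne_zero)
  have htail : subst α β r < ω ^ subst α β L := by
    rcases eq_or_ne r 0 with hr0 | hr0
    · rw [hr0, subst_zero]
      exact opow_pos _ omega0_pos
    rw [lt_opow_iff_log_lt one_lt_omega0 (subst_ne_zero hβ hr0),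
      (CNF_head_eq_of_CNF_eq_map hr0 (ih r hr hy.mod).1).1]
    exact (ih L hL hy.log).2 _ ((lt_opow_iff_log_lt one_lt_omega0 hr0).1 hrL) hy.mod.log
  rw [subst_eq_opow_mul_add hβ hy0, CNF.opow_mul_add one_lt_omega0 (div_opow_log_pos ω hy0).ne'
    (div_opow_log_lt y one_lt_omega0) htail, (ih r hr hy.mod).1, CNF.ne_zero hy0, List.map_cons]
  rfl

theorem subst_lt_subst_step (hα : IsEps α) (hβ : IsEps β) (hy : SubstAdmissible α β y)
    (hCNF : CNF ω (subst α β y) = (CNF ω y).map (Prod.map (subst α β) id))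
    (ih : ∀ z < y, SubstAdmissible α β z →
      CNF ω (subst α β z) = (CNF ω z).map (Prod.map (subst α β) id) ∧
      ∀ x < z, SubstAdmissible α β x → subst α β x < subst α β z)
    (hxy : x < y) (hx : SubstAdmissible α β x) :
    subst α β x < subst α β y := by
  by_cases hε : IsEps y
  · rcases hy (mem_Ep_self hε) with rfl | ⟨hyα, -⟩
    · rw [subst_self hα, subst_of_lt hβ hxy]
      exact hx.lt_of_lt hβ hxy
    · rwa [subst_of_lt hβ hyα, subst_of_lt hβ (hxy.trans hyα)]
  have hy0 : y ≠ 0 := (zero_le.trans_lt hxy).ne'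
  rcases eq_or_ne x 0 with rfl | hx0
  · rw [subst_zero]
    exact pos_iff_ne_zero.2 (subst_ne_zero hβ hy0)
  set L := log ω y
  obtain ⟨hlogx, hdivx⟩ := CNF_head_eq_of_CNF_eq_map hx0 (ih x hxy hx).1
  obtain ⟨hlogy, -⟩ := CNF_head_eq_of_CNF_eq_map hy0 hCNF
  have hσy : ω ^ subst α β L * (y / ω ^ L) ≤ subst α β y := by
    rw [subst_eq_opow_mul_add hβ hy0]
    exact le_self_add
  rcases (log_mono_right ω hxy.le).lt_or_eq with hlt | heq
  · calc subst α β x < ω ^ subst α β L := by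
          rw [lt_opow_iff_log_lt one_lt_omega0 (subst_ne_zero hβ hx0), hlogx]
          exact (ih L (log_lt_self_of_not_isEps hε hy0) hy.log).2 _ hlt hx.log
      _ = ω ^ log ω (subst α β y) := by rw [hlogy]
      _ ≤ subst α β y := opow_log_le_self _ (subst_ne_zero hβ hy0)
  have hxmod := hx.mod
  rw [heq] at hlogx hdivx hxmod
  rcases div_lt_div_or_mod_lt_mod (b := ω ^ L) hxy with hc | ⟨hc, hr⟩
  · calc subst α β x < ω ^ subst α β L * Order.succ (x / ω ^ L) := by
          have := lt_mul_succ_div (subst α β x)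
            (opow_ne_zero (log ω (subst α β x)) omega0_ne_zero)
          rwa [hdivx, hlogx] at this
      _ ≤ ω ^ subst α β L * (y / ω ^ L) := mul_le_mul_right (Order.succ_le_of_lt hc) _
      _ ≤ subst α β y := hσy
  · have hrσ := (ih _ (mod_opow_log_lt_self ω hy0) hy.mod).2 _ hr hxmod
    rw [subst_eq_opow_mul_add hβ hx0, subst_eq_opow_mul_add hβ hy0, heq, hc]
    exact (add_lt_add_iff_left _).2 hrσ

theorem CNF_subst_and_subst_lt (hα : IsEps α) (hβ : IsEps β) (hy : SubstAdmissible α β y) :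
    CNF ω (subst α β y) = (CNF ω y).map (Prod.map (subst α β) id) ∧
      ∀ x < y, SubstAdmissible α β x → subst α β x < subst α β y := by
  induction y using WellFoundedLT.induction with
  | _ y ih =>
  have hCNF := CNF_subst_step hβ hy ih
  exact ⟨hCNF, fun _ hxy hx => subst_lt_subst_step hα hβ hy hCNF ih hxy hx⟩

theorem CNF_subst (hα : IsEps α) (hβ : IsEps β) (hx : SubstAdmissible α β x) :
    CNF ω (subst α β x) = (CNF ω x).map (Prod.map (subst α β) id) :=
  (CNF_subst_and_subst_lt hα hβ hx).1

theorem strictMonoOn_subst (hα : IsEps α) (hβ : IsEps β) :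
    StrictMonoOn (subst α β) {x | SubstAdmissible α β x} :=
  fun _ hx _ hy hxy => (CNF_subst_and_subst_lt hα hβ hy).2 _ hxy hx

theorem log_subst (hα : IsEps α) (hβ : IsEps β) (hx : SubstAdmissible α β x) :
    log ω (subst α β x) = subst α β (log ω x) := by
  rcases eq_or_ne x 0 with rfl | hx0
  · rw [subst_zero, log_zero_right, subst_zero]
  · exact (CNF_head_eq_of_CNF_eq_map hx0 (CNF_subst hα hβ hx)).1

end Main

section LeadingTerm

variable {α β x L : Ordinal.{0}}

theorem piOrd_zero : piOrd 0 = 0 := if_pos rfl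

theorem piOrd_of_ne_zero (hx : x ≠ 0) : piOrd x = ω ^ log ω x := if_neg hx

theorem dOrd_opow (L : Ordinal.{0}) :
    dOrd (ω ^ L) = (((CNF ω L).getLast?).map Prod.fst).getD 0 := by
  rw [dOrd, log_opow one_lt_omega0, if_pos rfl]

theorem dOrd_zero : dOrd 0 = 0 := by
  simp [dOrd]

theorem dOrd_opow_le (L : Ordinal.{0}) : dOrd (ω ^ L) ≤ L := by
  rw [dOrd_opow]
  cases h : (CNF ω L).getLast? with
  | none => exact zero_le
  | some p => exact (CNF.fst_le_log (List.mem_of_getLast? h)).trans (log_le_self _ _)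

theorem Ep_dOrd_opow_subset (L : Ordinal.{0}) : Ep (dOrd (ω ^ L)) ⊆ Ep L := by
  rw [dOrd_opow]
  cases h : (CNF ω L).getLast? with
  | none => simp [Ep_zero]
  | some p => exact Ep_subset_of_mem_CNF (List.mem_of_getLast? h)

theorem dOrd_opow_subst (hα : IsEps α) (hβ : IsEps β) (hL : SubstAdmissible α β L) :
    dOrd (ω ^ subst α β L) = subst α β (dOrd (ω ^ L)) := by
  rw [dOrd_opow, dOrd_opow, CNF_subst hα hβ hL, List.getLast?_map]
  cases (CNF ω L).getLast? <;> simp [subst_zero]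

theorem piOrd_subst (hα : IsEps α) (hβ : IsEps β) (hx : SubstAdmissible α β x) :
    piOrd (subst α β x) = subst α β (piOrd x) := by
  rcases eq_or_ne x 0 with rfl | hx0
  · rw [subst_zero, piOrd_zero, subst_zero]
  rw [piOrd_of_ne_zero hx0, piOrd_of_ne_zero (subst_ne_zero hβ hx0), log_subst hα hβ hx,
    subst_opow hβ]

theorem dOrd_piOrd_subst (hα : IsEps α) (hβ : IsEps β) (hx : SubstAdmissible α β x) :
    dOrd (piOrd (subst α β x)) = subst α β (dOrd (piOrd x)) := by
  rcases eq_or_ne x 0 with rfl | hx0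
  · rw [subst_zero, piOrd_zero, dOrd_zero, subst_zero]
  rw [piOrd_subst hα hβ hx, piOrd_of_ne_zero hx0, subst_opow hβ, dOrd_opow_subst hα hβ hx.log]

theorem etaOrd_subst (hα : IsEps α) (hβ : IsEps β) (hx : SubstAdmissible α β x) :
    etaOrd (subst α β x) = subst α β (etaOrd x) := by
  rcases eq_or_ne x 0 with rfl | hx0
  · simp [etaOrd, subst_zero, piOrd_zero, dOrd_zero]
  set L := log ω x
  have hE : dOrd (ω ^ L) ≤ ω ^ L := (dOrd_opow_le L).trans (right_le_opow L one_lt_omega0)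
  have hs : SubstAdmissible α β (ω ^ L + dOrd (ω ^ L)) :=
    hx.mono <| (Ep_opow_add_subset hE).trans <|
      union_subset (Ep_log_subset x) ((Ep_dOrd_opow_subset L).trans (Ep_log_subset x))
  rw [etaOrd, etaOrd, dOrd_piOrd_subst hα hβ hx, piOrd_subst hα hβ hx, piOrd_of_ne_zero hx0,
    subst_opow hβ, ← subst_opow_add hβ hE]
  exact ((strictMonoOn_subst hα hβ).monotoneOn.map_max hx hs).symm

end LeadingTerm

theorem pi_eta_subst_general (α β t : Ordinal.{0}) (hα : IsEps α) (hβ : IsEps β)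
    (ht2 : t < nextEps α) (hEp : Ep t ∩ Set.Iio α ⊆ Set.Iio β) :
    piOrd (subst α β t) = subst α β (piOrd t) ∧
    dOrd (piOrd (subst α β t)) = subst α β (dOrd (piOrd t)) ∧
    etaOrd (subst α β t) = subst α β (etaOrd t) := by
  have ht := SubstAdmissible.of_lt_nextEps ht2 hEp
  exact ⟨piOrd_subst hα hβ ht, dOrd_piOrd_subst hα hβ ht, etaOrd_subst hα hβ ht⟩

/-- The substitution t ↦ t[α := β] commutes with π, d∘π and η. -/
theorem pi_eta_subst (α β t : Ordinal.{0}) (hα : IsEps α) (hβ : IsEps β)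
    (ht1 : α ≤ t) (ht2 : t < nextEps α) (hEp : Ep t ∩ Set.Iio α ⊆ Set.Iio β) :
    piOrd (subst α β t) = subst α β (piOrd t) ∧
    dOrd (piOrd (subst α β t)) = subst α β (dOrd (piOrd t)) ∧
    etaOrd (subst α β t) = subst α β (etaOrd t) :=
  pi_eta_subst_general α β t hα hβ ht2 hEp
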